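/- arXiv:1604.07923 — 2 statements merged into one kernel-verified Lean document; each statement's English description precedes it below -/
import Mathlib

section
/- For all positive real constants α and β, and every s > 0, one has ln(α·e^{βs} + 1)/s ≥ αβ/(α + 1); in other words, the infimum over s ∈ (0,∞) of the function h(s) = ln(α·e^{βs} + 1)/s is at least αβ/(α + 1). -/
/-! Convexity of `exp` with weights `α/(α+1)` and `1/(α+1)` gives
`(α + 1) * exp (α/(α+1) * x) ≤ α * exp x + 1`; take logarithms, put `x = β s` and drop
`log (α + 1) ≥ 0`. -/

open Real

theorem exp_mul_le_mul_exp_add_one_sub {t : ℝ} (ht₀ : 0 ≤ t) (ht₁ : t ≤ 1) (x : ℝ) :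
    exp (t * x) ≤ t * exp x + (1 - t) := by
  have h := convexOn_exp.2 (Set.mem_univ x) (Set.mem_univ 0) ht₀ (sub_nonneg.2 ht₁)
    (add_sub_cancel t 1)
  simpa only [smul_eq_mul, mul_zero, add_zero, exp_zero, mul_one] using h

theorem log_add_one_add_mul_le_log_mul_exp_add_one {α : ℝ} (hα : 0 ≤ α) (x : ℝ) :
    log (α + 1) + α / (α + 1) * x ≤ log (α * exp x + 1) := by
  have hα₁ : 0 < α + 1 := by linarith
  have hjensen := exp_mul_le_mul_exp_add_one_sub (t := α / (α + 1)) (by positivity)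
    ((div_le_one hα₁).2 (by linarith)) x
  have hkey : (α + 1) * exp (α / (α + 1) * x) ≤ α * exp x + 1 := by
    calc (α + 1) * exp (α / (α + 1) * x)
        ≤ (α + 1) * (α / (α + 1) * exp x + (1 - α / (α + 1))) := by gcongr
      _ = α * exp x + 1 := by field_simp; ring
  calc log (α + 1) + α / (α + 1) * x = log ((α + 1) * exp (α / (α + 1) * x)) := by
        rw [log_mul hα₁.ne' (exp_ne_zero _), log_exp]
    _ ≤ log (α * exp x + 1) := log_le_log (by positivity) hkey

theorem stmt_0_general (α β : ℝ) (hα : 0 < α) :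
    ∀ s : ℝ, 0 < s →
      Real.log (α * Real.exp (β * s) + 1) / s ≥ α * β / (α + 1) := by
  intro s hs
  have hbound := log_add_one_add_mul_le_log_mul_exp_add_one hα.le (β * s)
  have hlog : 0 ≤ log (α + 1) := log_nonneg (by linarith)
  rw [ge_iff_le, le_div_iff₀ hs]
  calc α * β / (α + 1) * s = α / (α + 1) * (β * s) := by ring
    _ ≤ _ := by linarith

theorem stmt_0 (α β : ℝ) (hα : 0 < α) (hβ : 0 < β) :
    ∀ s : ℝ, 0 < s →
      Real.log (α * Real.exp (β * s) + 1) / s ≥ α * β / (α + 1) :=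
  stmt_0_general α β hα
end

section
/- Let α, β > 0 be real constants and let t be a real number with 0 < t < αβ/(α + 1). Then for every real K > 0 one has e^{-βK}·(e^{tK} - 1) < α. -/
/-! Writing `s = t / β ∈ [0, 1]` and `y = β K`, convexity of `exp` gives
`exp (s y) - 1 ≤ s (exp y - 1)`, hence `exp (-y) (exp (s y) - 1) ≤ s (1 - exp (-y)) < s`.
Finally `s < α / (α + 1)`, which is below both `1` and `α`. -/

open Real

lemma Real.exp_mul_sub_one_le {s : ℝ} (hs₀ : 0 ≤ s) (hs₁ : s ≤ 1) (y : ℝ) :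
    exp (s * y) - 1 ≤ s * (exp y - 1) := by
  have h := convexOn_exp.2 (Set.mem_univ y) (Set.mem_univ 0) hs₀ (sub_nonneg.2 hs₁)
    (add_sub_cancel s 1)
  simp only [smul_eq_mul, mul_zero, add_zero, exp_zero, mul_one] at h
  linarith

lemma Real.exp_neg_mul_mul_exp_sub_one_le {β t : ℝ} (hβ : 0 < β) (ht₀ : 0 ≤ t) (htβ : t ≤ β)
    (K : ℝ) : exp (-β * K) * (exp (t * K) - 1) ≤ t / β := by
  set s := t / β
  have hs₀ : 0 ≤ s := div_nonneg ht₀ hβ.le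
  have hs₁ : s ≤ 1 := (div_le_one hβ).2 htβ
  have htK : t * K = s * (β * K) := by simp only [s]; field_simp
  calc exp (-β * K) * (exp (t * K) - 1)
      ≤ exp (-β * K) * (s * (exp (β * K) - 1)) := by
        rw [htK]; gcongr; exact exp_mul_sub_one_le hs₀ hs₁ _
    _ = s * (1 - exp (-β * K)) := by
        rw [neg_mul, exp_neg]; field_simp
    _ ≤ s := mul_le_of_le_one_right hs₀ (by linarith [exp_pos (-β * K)])

theorem stmt_1 (α β t : ℝ) (hα : 0 < α) (hβ : 0 < β)
    (ht0 : 0 < t) (ht : t < α * β / (α + 1)) :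
    ∀ K : ℝ, 0 < K →
      Real.exp (-β * K) * (Real.exp (t * K) - 1) < α := by
  intro K _
  have hts : t / β < α / (α + 1) := by
    rw [div_lt_iff₀ hβ, div_mul_eq_mul_div]; exact ht
  have hα₁ : α / (α + 1) < 1 := (div_lt_one (by linarith)).2 (by linarith)
  have hαα : α / (α + 1) < α := div_lt_self hα (by linarith)
  have htβ : t ≤ β := ((div_lt_one hβ).1 (hts.trans hα₁)).le
  calc Real.exp (-β * K) * (Real.exp (t * K) - 1) ≤ t / β :=
        exp_neg_mul_mul_exp_sub_one_le hβ ht0.le htβ K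
    _ < α := hts.trans hαα
end
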